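/- arXiv:math/0211123 — 3 statements merged into one kernel-verified Lean document; each statement's English description precedes it below -/
import Mathlib

section
/- Let (a_n)_{n≥0} be a bounded sequence of complex numbers with A = sup_n |a_n|, and define f(x) = Σ_{n=0}^∞ a_n·2^{−n}·exp(2^n·i·x) on ℝ. Then f is continuous and satisfies the Zygmund condition |f(x+h) + f(x−h) − 2f(x)| ≤ 10·A·|h| for all x, h ∈ ℝ. -/
theorem stmt_17 (a : ℕ → ℂ) (A : ℝ) (hA : ∀ n : ℕ, ‖a n‖ ≤ A)
    (f : ℝ → ℂ)
    (hf : ∀ x : ℝ, f x = ∑' n : ℕ, a n * (2 : ℂ)⁻¹ ^ n * Complex.exp ((2 : ℂ) ^ n * Complex.I * x)) :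
    Continuous f ∧
      ∀ x h : ℝ, ‖f (x + h) + f (x - h) - 2 * f x‖ ≤ 10 * A * |h| := by
  have hA0 : 0 ≤ A := le_trans (norm_nonneg _) (hA 0)
  have hgeo : Summable (fun n : ℕ => A * (2:ℝ)⁻¹ ^ n) :=
    (summable_geometric_of_lt_one (by norm_num) (by norm_num)).mul_left A
  have hnorm : ∀ (n : ℕ) (x : ℝ),
      ‖a n * (2:ℂ)⁻¹ ^ n * Complex.exp ((2:ℂ)^n * Complex.I * x)‖ ≤ A * (2:ℝ)⁻¹ ^ n := by
    intro n x
    have harg : (2:ℂ)^n * Complex.I * x = (((2:ℝ)^n * x : ℝ) : ℂ) * Complex.I := by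
      push_cast; ring
    rw [harg, norm_mul, norm_mul, norm_pow]
    have he : ‖Complex.exp ((((2:ℝ)^n * x : ℝ) : ℂ) * Complex.I)‖ = 1 := by
      rw [Complex.norm_exp_ofReal_mul_I]
    have h2i : ‖(2:ℂ)⁻¹‖ = (2:ℝ)⁻¹ := by norm_num
    rw [he, mul_one, h2i]
    apply mul_le_mul_of_nonneg_right _ (by positivity)
    exact hA n
  have hsum : ∀ x : ℝ,
      Summable (fun n : ℕ => a n * (2:ℂ)⁻¹ ^ n * Complex.exp ((2:ℂ)^n * Complex.I * x)) :=
    fun x => Summable.of_norm_bounded hgeo (fun n => hnorm n x)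
  have hcont : Continuous f := by
    have hfe : f = fun x : ℝ => ∑' n : ℕ, a n * (2:ℂ)⁻¹ ^ n *
        Complex.exp ((2:ℂ)^n * Complex.I * x) := funext hf
    rw [hfe]
    refine continuous_tsum (fun n => ?_) hgeo (fun n x => hnorm n x)
    fun_prop
  refine ⟨hcont, fun x h => ?_⟩
  -- abbreviation for the difference term
  set G : ℕ → ℂ := fun n => a n * (2:ℂ)⁻¹^n * Complex.exp ((2:ℂ)^n * Complex.I * x) *
      (Complex.exp ((((2:ℝ)^n * h : ℝ) : ℂ) * Complex.I) +
       Complex.exp (-(((2:ℝ)^n * h : ℝ) : ℂ) * Complex.I) - 2) with hG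
  have habs : ∀ r : ℝ, ‖Complex.exp ((r:ℂ) * Complex.I) +
      Complex.exp (-(r:ℂ) * Complex.I) - 2‖ = 2 * (1 - Real.cos r) := by
    intro r
    have : Complex.exp ((r:ℂ) * Complex.I) + Complex.exp (-(r:ℂ) * Complex.I) - 2
        = ((2 * Real.cos r - 2 : ℝ) : ℂ) := by
      rw [Complex.exp_mul_I, Complex.exp_mul_I, Complex.cos_neg, Complex.sin_neg]
      push_cast [← Complex.ofReal_cos]
      ring
    rw [this, Complex.norm_real, Real.norm_eq_abs, abs_of_nonpos (by nlinarith [Real.cos_le_one r])]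
    ring
  have hcos4 : ∀ r : ℝ, 2 * (1 - Real.cos r) ≤ 4 := by
    intro r; nlinarith [Real.neg_one_le_cos r]
  have hcossq : ∀ r : ℝ, 2 * (1 - Real.cos r) ≤ r ^ 2 := by
    intro r; nlinarith [Real.one_sub_sq_div_two_le_cos (x := r)]
  have hGnorm : ∀ n : ℕ, ‖G n‖ = ‖a n * (2:ℂ)⁻¹^n * Complex.exp ((2:ℂ)^n * Complex.I * x)‖ *
      (2 * (1 - Real.cos ((2:ℝ)^n * h))) := by
    intro n
    rw [hG]
    rw [norm_mul, ← habs ((2:ℝ)^n * h)]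
  have hGle : ∀ n : ℕ, ‖G n‖ ≤ A * (2:ℝ)⁻¹^n * (2 * (1 - Real.cos ((2:ℝ)^n * h))) := by
    intro n
    rw [hGnorm n]
    have h2 : 0 ≤ 2 * (1 - Real.cos ((2:ℝ)^n * h)) := by
      nlinarith [Real.cos_le_one ((2:ℝ)^n * h)]
    exact mul_le_mul_of_nonneg_right (hnorm n x) h2
  have hG4 : ∀ n : ℕ, ‖G n‖ ≤ 4 * A * (2:ℝ)⁻¹^n := by
    intro n
    calc ‖G n‖ ≤ A * (2:ℝ)⁻¹^n * (2 * (1 - Real.cos ((2:ℝ)^n * h))) := hGle n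
    _ ≤ A * (2:ℝ)⁻¹^n * 4 := by
        apply mul_le_mul_of_nonneg_left (hcos4 _) (by positivity)
    _ = 4 * A * (2:ℝ)⁻¹^n := by ring
  have hGsq : ∀ n : ℕ, ‖G n‖ ≤ A * (2:ℝ)^n * h^2 := by
    intro n
    calc ‖G n‖ ≤ A * (2:ℝ)⁻¹^n * (2 * (1 - Real.cos ((2:ℝ)^n * h))) := hGle n
    _ ≤ A * (2:ℝ)⁻¹^n * (((2:ℝ)^n * h)^2) := by
        apply mul_le_mul_of_nonneg_left (hcossq _) (by positivity)
    _ = A * (2:ℝ)^n * h^2 := by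
        rw [inv_pow]
        field_simp
  have hGsummable : Summable (fun n => ‖G n‖) := by
    apply Summable.of_nonneg_of_le (fun n => norm_nonneg _) hG4
    exact (summable_geometric_of_lt_one (by norm_num) (by norm_num)).mul_left (4*A)
  have key : f (x + h) + f (x - h) - 2 * f x = ∑' n, G n := by
    rw [hf, hf, hf, ← tsum_mul_left, ← Summable.tsum_add (hsum _) (hsum _),
      ← Summable.tsum_sub ((hsum _).add (hsum _)) ((hsum _).mul_left 2)]
    apply tsum_congr; intro n
    have e1 : Complex.exp ((2:ℂ)^n * Complex.I * (↑(x+h))) =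
        Complex.exp ((2:ℂ)^n * Complex.I * x) *
        Complex.exp ((((2:ℝ)^n * h : ℝ) : ℂ) * Complex.I) := by
      rw [← Complex.exp_add]; congr 1; push_cast; ring
    have e2 : Complex.exp ((2:ℂ)^n * Complex.I * (↑(x-h))) =
        Complex.exp ((2:ℂ)^n * Complex.I * x) *
        Complex.exp (-(((2:ℝ)^n * h : ℝ) : ℂ) * Complex.I) := by
      rw [← Complex.exp_add]; congr 1; push_cast; ring
    rw [hG]
    simp only [e1, e2]
    ring
  have habs_le : ‖f (x + h) + f (x - h) - 2 * f x‖ ≤ ∑' n, ‖G n‖ := by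
    rw [key]
    exact norm_tsum_le_tsum_norm hGsummable
  have hsum4 : Summable (fun n : ℕ => 4 * A * (2:ℝ)⁻¹ ^ n) :=
    (summable_geometric_of_lt_one (by norm_num) (by norm_num)).mul_left (4*A)
  have htsum4 : ∑' n : ℕ, 4 * A * (2:ℝ)⁻¹ ^ n = 8 * A := by
    rw [tsum_mul_left, tsum_geometric_of_lt_one (by norm_num) (by norm_num)]
    have : ((1:ℝ) - 2⁻¹)⁻¹ = 2 := by norm_num
    rw [this]; ring
  rcases eq_or_ne h 0 with rfl | hh
  · have : f (x + 0) + f (x - 0) - 2 * f x = 0 := by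
      simp only [add_zero, sub_zero]; ring
    rw [this]
    simp
  have ht0 : 0 < |h| := abs_pos.mpr hh
  rcases le_or_gt 1 |h| with hbig | hsmall
  · -- |h| ≥ 1 : crude bound 8A ≤ 10A|h|
    calc ‖f (x + h) + f (x - h) - 2 * f x‖ ≤ ∑' n, ‖G n‖ := habs_le
    _ ≤ ∑' n : ℕ, 4 * A * (2:ℝ)⁻¹ ^ n := Summable.tsum_le_tsum hG4 hGsummable hsum4
    _ = 8 * A := htsum4
    _ ≤ 10 * A * |h| := by nlinarith
  · -- |h| < 1 : dyadic splitting
    set t : ℝ := |h| with htdef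
    have hinv1 : (1:ℝ) ≤ 1 / t := by
      rw [le_div_iff₀ ht0]; linarith
    set m : ℕ := ⌊1 / t⌋₊ with hm
    have hm1 : 1 ≤ m := by
      rw [hm]; exact Nat.le_floor (by exact_mod_cast hinv1)
    set N : ℕ := Nat.log 2 m with hN
    have hlow : ((2:ℝ))^N ≤ 1 / t := by
      have h1 : 2 ^ N ≤ m := Nat.pow_log_le_self 2 (by omega)
      have h2 : (m : ℝ) ≤ 1 / t := Nat.floor_le (by positivity)
      calc ((2:ℝ))^N = ((2^N : ℕ) : ℝ) := by push_cast; ring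
      _ ≤ (m : ℝ) := by exact_mod_cast h1
      _ ≤ 1 / t := h2
    have hhigh : 1 / t < ((2:ℝ))^(N+1) := by
      have h1 : m < 2 ^ (N + 1) := Nat.lt_pow_succ_log_self (by norm_num) m
      have h2 : (1:ℝ) / t < m + 1 := Nat.lt_floor_add_one _
      have h3 : (m:ℝ) + 1 ≤ ((2:ℝ))^(N+1) := by
        have : (m + 1 : ℕ) ≤ 2 ^ (N+1) := by omega
        calc (m:ℝ) + 1 = ((m+1 : ℕ) : ℝ) := by push_cast; ring
        _ ≤ (((2:ℕ)^(N+1) : ℕ) : ℝ) := by exact_mod_cast this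
        _ = ((2:ℝ))^(N+1) := by push_cast; ring
      linarith
    have hptw : t * (2:ℝ)^N ≤ 1 := by
      have h1 := mul_le_mul_of_nonneg_left hlow ht0.le
      rwa [mul_one_div, div_self (ne_of_gt ht0)] at h1
    have hqtw : (2:ℝ)⁻¹ ^ (N+1) ≤ t := by
      rw [one_div] at hhigh
      rw [inv_pow, inv_le_comm₀ (by positivity) ht0]
      linarith [hhigh]
    -- the bounding sequence
    set u : ℕ → ℝ := fun n => if n ≤ N then A * (2:ℝ)^n * h^2 else 4 * A * (2:ℝ)⁻¹^n with hu
    have hGu : ∀ n, ‖G n‖ ≤ u n := by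
      intro n
      rw [hu]
      by_cases hn : n ≤ N
      · simpa [hn] using hGsq n
      · simpa [hn] using hG4 n
    have husum : Summable u := by
      rw [← summable_nat_add_iff (N+1)]
      have : ∀ n : ℕ, u (n + (N+1)) = 4 * A * (2:ℝ)⁻¹^(n + (N+1)) := by
        intro n; rw [hu]; simp only [ite_eq_right_iff]
        intro hcon; omega
      rw [funext this]
      exact (((summable_geometric_of_lt_one (by norm_num) (by norm_num)).mul_left
        (4*A)).comp_injective (add_left_injective (N+1)))
    have htail : ∑' n : ℕ, u (n + (N+1)) = 8 * A * (2:ℝ)⁻¹^(N+1) := by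
      have he : ∀ n : ℕ, u (n + (N+1)) = (4 * A * (2:ℝ)⁻¹^(N+1)) * (2:ℝ)⁻¹^n := by
        intro n; rw [hu]
        have : ¬ (n + (N+1) ≤ N) := by omega
        simp only [this, if_false, pow_add]
        ring
      rw [funext he, tsum_mul_left, tsum_geometric_of_lt_one (by norm_num) (by norm_num)]
      norm_num
      ring
    have hhead : ∑ i ∈ Finset.range (N+1), u i = A * h^2 * ((2:ℝ)^(N+1) - 1) := by
      have he : ∀ i ∈ Finset.range (N+1), u i = (A * h^2) * (2:ℝ)^i := by
        intro i hi
        rw [Finset.mem_range] at hi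
        rw [hu]
        have : i ≤ N := by omega
        simp only [this, if_true]
        ring
      rw [Finset.sum_congr rfl he, ← Finset.mul_sum, geom_sum_eq (by norm_num)]
      norm_num
    have hsplit : ∑' n, u n = A * h^2 * ((2:ℝ)^(N+1) - 1) + 8 * A * (2:ℝ)⁻¹^(N+1) := by
      rw [← Summable.sum_add_tsum_nat_add (N+1) husum, hhead, htail]
    have hh2 : h^2 = t^2 := (_root_.sq_abs h).symm
    calc ‖f (x + h) + f (x - h) - 2 * f x‖ ≤ ∑' n, ‖G n‖ := habs_le
    _ ≤ ∑' n, u n := Summable.tsum_le_tsum hGu hGsummable husum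
    _ = A * h^2 * ((2:ℝ)^(N+1) - 1) + 8 * A * (2:ℝ)⁻¹^(N+1) := hsplit
    _ ≤ A * t^2 * (2:ℝ)^(N+1) + 8 * A * t := by
        rw [hh2]
        gcongr
        · nlinarith [pow_pos (by norm_num : (0:ℝ) < 2) (N+1)]
    _ ≤ 2 * A * t + 8 * A * t := by
        have hps : (2:ℝ)^(N+1) = 2^N * 2 := pow_succ 2 N
        have h5 : 2*t*(t*(2:ℝ)^N) ≤ 2*t := by nlinarith [hptw, ht0.le]
        have h6 : t^2 * (2:ℝ)^(N+1) ≤ 2 * t := by rw [hps]; nlinarith [h5]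
        nlinarith [hA0, h6]
    _ = 10 * A * |h| := by rw [htdef]; ring
end

section
/- Let (M,d) be a metric space, 0 < α < 1, and f : M → ℝ Lipschitz of order α with seminorm ‖f‖_{Lip α}. For L > 0 define A_L(f)(x) = inf { f(w) + L·d(x,w) : w ∈ M }. Then A_L(f) is L-Lipschitz, and for every x ∈ M: f(x) − ‖f‖_{Lip α}^{1/(1−α)}·L^{−α/(1−α)} ≤ A_L(f)(x) ≤ f(x). Moreover, if h : M → ℝ is any L-Lipschitz function with h ≤ f on M, then h ≤ A_L(f) on M. -/
open Real

lemma key_bound {α C L : ℝ} (hα : 0 < α) (hα1 : α < 1) (hC : 0 ≤ C) (hL : 0 < L)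
    {t : ℝ} (ht : 0 ≤ t) :
    C * t ^ α ≤ L * t + C ^ (1 / (1 - α)) * L ^ (-α / (1 - α)) := by
  have h1α : 0 < 1 - α := by linarith
  rcases eq_or_lt_of_le hC with hC0 | hCpos
  · rw [← hC0, Real.zero_rpow (by positivity)]
    have h0 : (0:ℝ) * t ^ α = 0 := by ring
    rw [h0]
    positivity
  · set T : ℝ := (C / L) ^ (1 / (1 - α)) with hT
    have hCL : 0 < C / L := by positivity
    have hTpos : 0 < T := by positivity
    have hTα : T ^ α = C ^ (α / (1 - α)) * L ^ (-(α / (1 - α))) := by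
      rw [hT, ← Real.rpow_mul hCL.le]
      have he : 1 / (1 - α) * α = α / (1 - α) := by ring
      rw [he, Real.div_rpow hC hL.le, Real.rpow_neg hL.le, div_eq_mul_inv]
    have hKe : C ^ (1 / (1 - α)) * L ^ (-α / (1 - α)) = C * T ^ α := by
      rw [hTα, neg_div]
      have he : 1 / (1 - α) = 1 + α / (1 - α) := by field_simp; ring
      rw [he, Real.rpow_add hCpos, Real.rpow_one, mul_assoc]
    have hK0 : 0 ≤ C * T ^ α := by positivity
    rcases le_total t T with h | h
    · have h1 : t ^ α ≤ T ^ α := Real.rpow_le_rpow ht h hα.le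
      have h2 : C * t ^ α ≤ C * T ^ α := mul_le_mul_of_nonneg_left h1 hC
      have h3 : 0 ≤ L * t := by positivity
      rw [hKe]; linarith
    · have htpos : 0 < t := lt_of_lt_of_le hTpos h
      have h2 : t ^ (α - 1) ≤ T ^ (α - 1) :=
        Real.rpow_le_rpow_of_nonpos hTpos h (by linarith)
      have hTae : T ^ (α - 1) = L / C := by
        rw [hT, ← Real.rpow_mul hCL.le]
        have he : 1 / (1 - α) * (α - 1) = -1 := by field_simp; ring
        rw [he, Real.rpow_neg_one, inv_div]
      have hta : t ^ α = t ^ (α - 1) * t := by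
        rw [← Real.rpow_add_one htpos.ne']
        ring_nf
      have h3 : C * t ^ (α - 1) ≤ C * (L / C) := by
        rw [← hTae]; exact mul_le_mul_of_nonneg_left h2 hC
      have h4 : C * (L / C) = L := by field_simp
      have h5 : C * t ^ α ≤ L * t := by
        rw [hta, ← mul_assoc]
        have h6 := mul_le_mul_of_nonneg_right h3 htpos.le
        rw [h4] at h6
        exact h6
      rw [hKe]; linarith

theorem stmt_18 {M : Type*} [MetricSpace M] (α : ℝ) (hα : 0 < α) (hα1 : α < 1)
    (C : ℝ) (hC : 0 ≤ C) (f : M → ℝ)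
    (hf : ∀ x y : M, |f x - f y| ≤ C * dist x y ^ α)
    (L : ℝ) (hL : 0 < L) :
    (∀ x y : M,
        |(⨅ w : M, (f w + L * dist x w)) - ⨅ w : M, (f w + L * dist y w)| ≤ L * dist x y) ∧
    (∀ x : M,
        f x - C ^ (1 / (1 - α)) * L ^ (-α / (1 - α)) ≤ ⨅ w : M, (f w + L * dist x w)) ∧
    (∀ x : M, (⨅ w : M, (f w + L * dist x w)) ≤ f x) ∧
    (∀ h : M → ℝ, (∀ x y : M, |h x - h y| ≤ L * dist x y) → (∀ x : M, h x ≤ f x) →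
      ∀ x : M, h x ≤ ⨅ w : M, (f w + L * dist x w)) := by
  set K : ℝ := C ^ (1 / (1 - α)) * L ^ (-α / (1 - α)) with hK
  have hlow : ∀ x w : M, f x - K ≤ f w + L * dist x w := by
    intro x w
    have h1 : f x - f w ≤ C * dist x w ^ α := (abs_le.mp (hf x w)).2
    have h2 : C * dist x w ^ α ≤ L * dist x w + K :=
      key_bound hα hα1 hC hL dist_nonneg
    linarith
  have hbdd : ∀ x : M, BddBelow (Set.range fun w => f w + L * dist x w) := by
    intro x
    exact ⟨f x - K, by rintro _ ⟨w, rfl⟩; exact hlow x w⟩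
  refine ⟨?_, ?_, ?_, ?_⟩
  · intro x y
    have : Nonempty M := ⟨x⟩
    have step : ∀ a b : M, (⨅ w : M, (f w + L * dist a w)) ≤
        (⨅ w : M, (f w + L * dist b w)) + L * dist a b := by
      intro a b
      have h1 : (⨅ w : M, (f w + L * dist a w)) - L * dist a b ≤
          ⨅ w : M, (f w + L * dist b w) := by
        apply le_ciInf
        intro w
        have h2 : (⨅ w : M, (f w + L * dist a w)) ≤ f w + L * dist a w :=
          ciInf_le (hbdd a) w
        have h3 : dist a w ≤ dist a b + dist b w := dist_triangle a b w
        nlinarith [hL.le]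
      linarith
    rw [abs_sub_le_iff]
    constructor
    · have := step x y; linarith
    · have := step y x; rw [dist_comm y x] at this; linarith
  · intro x
    have : Nonempty M := ⟨x⟩
    exact le_ciInf (hlow x)
  · intro x
    have : Nonempty M := ⟨x⟩
    have := ciInf_le (hbdd x) x
    simpa using this
  · intro h hh hhf x
    have : Nonempty M := ⟨x⟩
    apply le_ciInf
    intro w
    have h1 : h x - h w ≤ L * dist x w := (abs_le.mp (hh x w)).2
    have h2 := hhf w
    linarith
end

section
/- Let (M,d) be a metric space, f : M → ℝ, and define the maximal function N(f)(x) = sup_{y≠x} |f(y)−f(x)|/d(y,x) (possibly +∞). Let L > 0 and F_L = {x ∈ M : N(f)(x) ≤ L}, assumed nonempty. Define A_L(f)(x) = inf { f(w) + L·d(x,w) : w ∈ M }. Then A_L(f)(x) is finite for every x, A_L(f) is L-Lipschitz on M, A_L(f)(x) ≤ f(x) for all x, A_L(f)(u) = f(u) for all u ∈ F_L, and f(x) − A_L(f)(x) ≤ 2L·dist(x, F_L) for all x ∈ M. -/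
/-!
The envelope `A x = ⨅ w, f w + L * dist x w` is an infimum of `L`-Lipschitz functions of `x`,
hence `L`-Lipschitz as soon as it is finite, and taking `w = x` gives `A ≤ f`. A point `u` where
`f` is `L`-Lipschitz from below keeps `A` bounded below and satisfies `A u = f u`. If `f` is
`L`-Lipschitz at `u` in both directions, then `f x ≤ f u + L d(x,u) = A u + L d(x,u) ≤ A x + 2 L d(x,u)`.
-/

open Metric Set

namespace LipschitzEnvelope

variable {M : Type*} [PseudoMetricSpace M] {f : M → ℝ} {L : ℝ} {x : M}

variable (f L) in
noncomputable def lipschitzEnvelope (x : M) : ℝ := ⨅ w, f w + L * dist x w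

theorem le_add_mul_dist_of_abs_sub_le {u : M} (hu : ∀ y, |f y - f u| ≤ L * dist y u) (y : M) :
    f u ≤ f y + L * dist u y := by
  rw [dist_comm]
  linarith [neg_abs_le (f y - f u), hu y]

theorem bddBelow_range_add_mul_dist (hL : 0 ≤ L) {u : M} (hu : ∀ y, f u ≤ f y + L * dist u y)
    (x : M) : BddBelow (range fun w => f w + L * dist x w) := by
  refine ⟨f u - L * dist x u, ?_⟩
  rintro _ ⟨w, rfl⟩
  have hw := hu w
  have htri : L * dist u w ≤ L * dist x u + L * dist x w := by
    rw [← mul_add, dist_comm x u]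
    exact mul_le_mul_of_nonneg_left (dist_triangle u x w) hL
  linarith

theorem lipschitzEnvelope_le (hb : BddBelow (range fun w => f w + L * dist x w)) :
    lipschitzEnvelope f L x ≤ f x :=
  (ciInf_le hb x).trans_eq (by simp)

theorem lipschitzEnvelope_le_add [Nonempty M] (hL : 0 ≤ L)
    (hb : BddBelow (range fun w => f w + L * dist x w)) (y : M) :
    lipschitzEnvelope f L x ≤ lipschitzEnvelope f L y + L * dist x y := by
  rw [← sub_le_iff_le_add]
  refine le_ciInf fun w => ?_
  have hx : lipschitzEnvelope f L x ≤ f w + L * dist x w := ciInf_le hb w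
  have htri : L * dist x w ≤ L * dist x y + L * dist y w := by
    rw [← mul_add]
    exact mul_le_mul_of_nonneg_left (dist_triangle x y w) hL
  linarith

theorem abs_lipschitzEnvelope_sub_le [Nonempty M] (hL : 0 ≤ L)
    (hb : ∀ x, BddBelow (range fun w => f w + L * dist x w)) (x y : M) :
    |lipschitzEnvelope f L x - lipschitzEnvelope f L y| ≤ L * dist x y := by
  have hxy := lipschitzEnvelope_le_add hL (hb x) y
  have hyx := lipschitzEnvelope_le_add hL (hb y) x
  rw [dist_comm] at hyx
  exact abs_sub_le_iff.2 ⟨by linarith, by linarith⟩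

theorem lipschitzEnvelope_eq_self {u : M} (hu : ∀ w, f u ≤ f w + L * dist u w) :
    lipschitzEnvelope f L u = f u :=
  have : Nonempty M := ⟨u⟩
  le_antisymm (lipschitzEnvelope_le ⟨f u, by rintro _ ⟨w, rfl⟩; exact hu w⟩) (le_ciInf hu)

theorem sub_lipschitzEnvelope_le (hL : 0 ≤ L) {u : M} (hu : ∀ y, |f y - f u| ≤ L * dist y u)
    (x : M) : f x - lipschitzEnvelope f L x ≤ 2 * L * dist x u := by
  have hu_below := le_add_mul_dist_of_abs_sub_le hu
  have hAu : lipschitzEnvelope f L u = f u := lipschitzEnvelope_eq_self hu_below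
  have : Nonempty M := ⟨u⟩
  have hux := lipschitzEnvelope_le_add hL (bddBelow_range_add_mul_dist hL hu_below u) x
  have hfx : f x ≤ f u + L * dist x u := by linarith [le_abs_self (f x - f u), hu x]
  rw [hAu, dist_comm u x] at hux
  linarith

theorem sub_lipschitzEnvelope_le_mul_infDist (hL : 0 < L) {s : Set M} (hs : s.Nonempty)
    (h : ∀ u ∈ s, ∀ y, |f y - f u| ≤ L * dist y u) (x : M) :
    f x - lipschitzEnvelope f L x ≤ 2 * L * infDist x s := by
  rw [← div_le_iff₀' (by positivity), le_infDist hs]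
  intro u hu
  rw [div_le_iff₀' (by positivity)]
  exact sub_lipschitzEnvelope_le hL.le (h u hu) x

end LipschitzEnvelope

open LipschitzEnvelope in
theorem stmt_19 {M : Type*} [MetricSpace M] (f : M → ℝ) (L : ℝ) (hL : 0 < L)
    (F : Set M) (hF : F = {u : M | ∀ y : M, |f y - f u| ≤ L * dist y u})
    (hFne : F.Nonempty) :
    (∀ x : M, BddBelow (Set.range fun w : M => f w + L * dist x w)) ∧
    (∀ x y : M,
        |(⨅ w : M, (f w + L * dist x w)) - ⨅ w : M, (f w + L * dist y w)| ≤ L * dist x y) ∧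
    (∀ x : M, (⨅ w : M, (f w + L * dist x w)) ≤ f x) ∧
    (∀ u ∈ F, (⨅ w : M, (f w + L * dist u w)) = f u) ∧
    (∀ x : M, f x - (⨅ w : M, (f w + L * dist x w)) ≤ 2 * L * Metric.infDist x F) := by
  subst hF
  obtain ⟨u₀, hu₀⟩ := hFne
  have : Nonempty M := ⟨u₀⟩
  have hb := bddBelow_range_add_mul_dist hL.le (le_add_mul_dist_of_abs_sub_le hu₀)
  refine ⟨hb, abs_lipschitzEnvelope_sub_le hL.le hb, fun x => lipschitzEnvelope_le (hb x),
    fun u hu => lipschitzEnvelope_eq_self (le_add_mul_dist_of_abs_sub_le hu),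
    sub_lipschitzEnvelope_le_mul_infDist hL ⟨u₀, hu₀⟩ fun u hu => hu⟩
end
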